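/- Let n ≥ 2 be an integer, let f ∈ PL_n(ℝ) satisfy φ_n(f(x)) = φ_n(x) for all x ∈ ℤ[1/n] (i.e., d_n(f) = 0), and let a < b be real numbers. Then there exists g ∈ BPL_n(ℝ) that agrees with f on the interval [a, b]. -/

import Mathlib

noncomputable section

/-- `ℤ[1/n]` realized as a subset of `ℝ`: all reals of the form `a * n^b` with `a b : ℤ`. -/
def zpows (n : ℕ) : Set ℝ := {x : ℝ | ∃ a b : ℤ, x = (a : ℝ) * (n : ℝ) ^ b}

/-- The defining properties of the (unique) ring homomorphism `φₙ : ℤ[1/n] → ℤ/(n-1)ℤ`,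
expressed for a function `φ : ℝ → ZMod (n-1)` restricted to the subset `zpows n`. -/
def IsPhi (n : ℕ) (φ : ℝ → ZMod (n - 1)) : Prop :=
  (∀ x ∈ zpows n, ∀ y ∈ zpows n, φ (x + y) = φ x + φ y) ∧
  (∀ x ∈ zpows n, ∀ y ∈ zpows n, φ (x * y) = φ x * φ y) ∧
  φ 1 = 1

/-- `B` is a discrete subset of `ℝ`: every point of `ℝ` has a neighborhood containing
at most one point of `B`. -/
def LocDiscrete (B : Set ℝ) : Prop := ∀ x : ℝ, ∃ ε > 0, ∀ y ∈ B, |y - x| < ε → y = x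

/-- Membership in `PLₙ(ℝ)`: an orientation-preserving homeomorphism of `ℝ`
(equivalently, a strictly monotone surjection), piecewise linear with breaks in a
discrete subset of `ℤ[1/n]`, all slopes integral powers of `n`, and mapping `ℤ[1/n]`
into itself. -/
def MemPL (n : ℕ) (f : ℝ → ℝ) : Prop :=
  StrictMono f ∧ Function.Surjective f ∧
  (∃ B : Set ℝ, B ⊆ zpows n ∧ LocDiscrete B ∧
    ∀ x ∉ B, ∃ (k : ℤ) (c : ℝ), ∃ ε > 0, ∀ y : ℝ, |y - x| < ε → f y = (n : ℝ) ^ k * y + c) ∧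
  (∀ q ∈ zpows n, f q ∈ zpows n)

/-- Membership in `BPLₙ(ℝ)`: elements of `PLₙ(ℝ)` with bounded support. -/
def MemBPL (n : ℕ) (f : ℝ → ℝ) : Prop :=
  MemPL n f ∧ ∃ M : ℝ, ∀ x : ℝ, M < |x| → f x = x

/-!
Choose integers `p < a` and `b < q`, keep `f` on `[p, q]`, and continue it by a left tail sending
`p ↦ f p` that is the identity near `-∞`, and a right tail sending `q ↦ f q` that is the identity
near `+∞`. Since `φₙ` kills `q - f q`, that displacement lies in `(n - 1) ℤ[1/n]`, say
`(q - f q) nᵏ = t (n - 1)`. The map `v = basicMap n` of slope `n` on `[-1, 1]` that translates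
by `±(n - 1)` outside has `vᵗ` equal to a translation by `t (n - 1)` near `+∞` (and by
`-t (n - 1)` near `-∞`); conjugating `vᵗ` by `x ↦ nᵏ (x - q)` and translating by `f q - q` gives
the right tail, and `v⁻ᵗ` gives the left one. Compositions of such maps stay in `PLₙ(ℝ)` because
the maps with finitely many breaks form a group.
-/

open Filter Topology

section Zpows

variable {n : ℕ}

lemma zpow_mem_zpows (k : ℤ) : (n : ℝ) ^ k ∈ zpows n := ⟨1, k, by simp⟩

variable [NeZero n]

lemma mem_zpows_iff {x : ℝ} : x ∈ zpows n ↔ ∃ (s : ℕ) (a : ℤ), x * (n : ℝ) ^ s = a := by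
  have hn : (n : ℝ) ≠ 0 := NeZero.ne _
  constructor
  · rintro ⟨a, b, rfl⟩
    obtain ⟨s, rfl | rfl⟩ := Int.eq_nat_or_neg b
    · exact ⟨0, a * n ^ s, by simp⟩
    · exact ⟨s, a, by simp [hn]⟩
  · rintro ⟨s, a, h⟩
    exact ⟨a, -s, by rw [← h, zpow_neg, zpow_natCast, mul_inv_cancel_right₀ (pow_ne_zero s hn)]⟩

variable (n) in
def zpowsSubring : Subring ℝ where
  carrier := zpows n
  mul_mem' {x y} hx hy := by
    obtain ⟨s, a, hx⟩ := mem_zpows_iff.mp hx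
    obtain ⟨s', a', hy⟩ := mem_zpows_iff.mp hy
    exact mem_zpows_iff.mpr ⟨s + s', a * a', by push_cast; rw [← hx, ← hy]; ring⟩
  one_mem' := ⟨1, 0, by simp⟩
  add_mem' {x y} hx hy := by
    obtain ⟨s, a, hx⟩ := mem_zpows_iff.mp hx
    obtain ⟨s', a', hy⟩ := mem_zpows_iff.mp hy
    exact mem_zpows_iff.mpr ⟨s + s', a * n ^ s' + a' * n ^ s, by push_cast; rw [← hx, ← hy]; ring⟩
  zero_mem' := ⟨0, 0, by simp⟩
  neg_mem' := by
    rintro _ ⟨a, b, rfl⟩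
    exact ⟨-a, b, by push_cast; ring⟩

lemma zpow_mul_mem_zpows_iff (k : ℤ) {x : ℝ} : (n : ℝ) ^ k * x ∈ zpows n ↔ x ∈ zpows n := by
  refine ⟨fun h => ?_, (zpowsSubring n).mul_mem (zpow_mem_zpows k)⟩
  have := (zpowsSubring n).mul_mem (zpow_mem_zpows (-k)) h
  rwa [← mul_assoc, ← zpow_add₀ (NeZero.ne _), neg_add_cancel, zpow_zero, one_mul] at this

lemma add_mem_zpows_iff {c x : ℝ} (hc : c ∈ zpows n) : x + c ∈ zpows n ↔ x ∈ zpows n :=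
  (zpowsSubring n).add_mem_cancel_right hc

namespace IsPhi

variable {φ : ℝ → ZMod (n - 1)}

def ringHom (hφ : IsPhi n φ) : zpowsSubring n →+* ZMod (n - 1) where
  toFun x := φ x
  map_one' := hφ.2.2
  map_mul' x y := hφ.2.1 x x.2 y y.2
  map_zero' := by
    have h := hφ.1 0 (zero_mem (zpowsSubring n)) 0 (zero_mem (zpowsSubring n))
    rw [add_zero] at h
    simpa using h
  map_add' x y := hφ.1 x x.2 y y.2

lemma exists_sub_mul_zpow_eq (hφ : IsPhi n φ) {x y : ℝ} (hx : x ∈ zpows n) (hy : y ∈ zpows n)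
    (h : φ x = φ y) : ∃ k t : ℤ, (x - y) * (n : ℝ) ^ k = t * ((n : ℝ) - 1) := by
  let X : zpowsSubring n := ⟨x, hx⟩
  let Y : zpowsSubring n := ⟨y, hy⟩
  obtain ⟨s, a, ha⟩ := mem_zpows_iff.mp ((zpowsSubring n).sub_mem hx hy)
  have hA : (a : zpowsSubring n) = (X - Y) * (n : zpowsSubring n) ^ s :=
    Subtype.ext (by simp [X, Y, ← ha])
  have hdvd : ((n - 1 : ℕ) : ℤ) ∣ a := by
    have hXY : hφ.ringHom X = hφ.ringHom Y := h
    rw [← ZMod.intCast_zmod_eq_zero_iff_dvd, ← map_intCast hφ.ringHom, hA, map_mul, map_sub, hXY,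
      sub_self, zero_mul]
  obtain ⟨t, rfl⟩ := hdvd
  refine ⟨s, t, ?_⟩
  rw [zpow_natCast, ha]
  push_cast [Nat.one_le_iff_ne_zero.mpr (NeZero.ne n)]
  ring

end IsPhi

end Zpows

section LocAffine

variable {n : ℕ}

variable (n) in
def IsLocAffineAt (g : ℝ → ℝ) (x : ℝ) : Prop :=
  ∃ (k : ℤ) (c : ℝ), ∀ᶠ y in 𝓝 x, g y = (n : ℝ) ^ k * y + c

variable (n) in
def breaks (g : ℝ → ℝ) : Set ℝ := {x | ¬ IsLocAffineAt n g x}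

lemma isLocAffineAt_iff {g : ℝ → ℝ} {x : ℝ} : IsLocAffineAt n g x ↔
    ∃ (k : ℤ) (c : ℝ), ∃ ε > 0, ∀ y : ℝ, |y - x| < ε → g y = (n : ℝ) ^ k * y + c := by
  simp only [IsLocAffineAt, Metric.eventually_nhds_iff, Real.dist_eq]

lemma IsLocAffineAt.congr {g g' : ℝ → ℝ} {x : ℝ} (hg : IsLocAffineAt n g x) (h : g =ᶠ[𝓝 x] g') :
    IsLocAffineAt n g' x := by
  obtain ⟨k, c, hk⟩ := hg
  exact ⟨k, c, h.symm.trans hk⟩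

lemma breaks_eq_empty {g : ℝ → ℝ} (k : ℤ) (c : ℝ) (hg : ∀ y, g y = (n : ℝ) ^ k * y + c) :
    breaks n g = ∅ :=
  Set.eq_empty_of_forall_notMem fun _ hx => hx ⟨k, c, .of_forall hg⟩

variable [NeZero n]

lemma IsLocAffineAt.comp {g h : ℝ → ℝ} {x : ℝ} (hg : IsLocAffineAt n g (h x))
    (hh : IsLocAffineAt n h x) (hcont : ContinuousAt h x) : IsLocAffineAt n (g ∘ h) x := by
  obtain ⟨k, c, hk⟩ := hg
  obtain ⟨k', c', hk'⟩ := hh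
  refine ⟨k + k', (n : ℝ) ^ k * c' + c, ?_⟩
  filter_upwards [hcont.eventually hk, hk'] with y h₁ h₂
  rw [Function.comp_apply, h₁, h₂, zpow_add₀ (NeZero.ne _)]
  ring

lemma IsLocAffineAt.perm_inv {e : Equiv.Perm ℝ} {x : ℝ} (he : IsLocAffineAt n e x)
    (hcont : ContinuousAt ⇑e⁻¹ (e x)) : IsLocAffineAt n ⇑e⁻¹ (e x) := by
  obtain ⟨k, c, hk⟩ := he
  have hcont' : Tendsto (⇑e⁻¹) (𝓝 (e x)) (𝓝 x) := by simpa using hcont.tendsto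
  have hk0 : (n : ℝ) ^ k ≠ 0 := zpow_ne_zero k (NeZero.ne _)
  refine ⟨-k, -((n : ℝ) ^ (-k) * c), ?_⟩
  filter_upwards [hcont'.eventually hk] with z hz
  rw [Equiv.Perm.coe_inv, Equiv.apply_symm_apply] at hz
  rw [Equiv.Perm.coe_inv]
  conv_rhs => rw [hz]
  rw [zpow_neg]
  field_simp
  ring

lemma breaks_comp_subset {g h : ℝ → ℝ} (hh : Continuous h) :
    breaks n (g ∘ h) ⊆ breaks n h ∪ h ⁻¹' breaks n g := by
  intro x hx
  by_contra hx'
  simp only [Set.mem_union, Set.mem_preimage, breaks, Set.mem_ofPred_eq, not_or, not_not] at hx'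
  exact hx (hx'.2.comp hx'.1 hh.continuousAt)

lemma breaks_perm_inv_subset {e : Equiv.Perm ℝ} (hcont : Continuous ⇑e⁻¹) :
    breaks n ⇑e⁻¹ ⊆ e '' breaks n e := by
  intro x hx
  refine ⟨e⁻¹ x, fun h => hx ?_, e.apply_symm_apply x⟩
  simpa using h.perm_inv hcont.continuousAt

end LocAffine

lemma locDiscrete_iff {B : Set ℝ} : LocDiscrete B ↔ ∀ x, ∀ᶠ y in 𝓝 x, y ∈ B → y = x := by
  simp only [LocDiscrete, Metric.eventually_nhds_iff, Real.dist_eq]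
  exact forall_congr' fun x => exists_congr fun ε => and_congr_right fun _ =>
    ⟨fun h y hy hyB => h y hyB hy, fun h y hyB hy => h hy hyB⟩

lemma LocDiscrete.union {A B : Set ℝ} (hA : LocDiscrete A) (hB : LocDiscrete B) :
    LocDiscrete (A ∪ B) := by
  rw [locDiscrete_iff] at *
  intro x
  filter_upwards [hA x, hB x] with y hyA hyB hy
  exact hy.elim hyA hyB

lemma Set.Finite.locDiscrete {B : Set ℝ} (hB : B.Finite) : LocDiscrete B := by
  rw [locDiscrete_iff]
  intro x
  filter_upwards [(hB.sdiff (t := {x})).isClosed.isOpen_compl.mem_nhds (by simp)] with y hy hyB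
  by_contra hyx
  exact hy ⟨hyB, hyx⟩

lemma StrictMono.perm_inv {α : Type*} [LinearOrder α] {e : Equiv.Perm α} (he : StrictMono e) :
    StrictMono ⇑e⁻¹ :=
  fun x y hxy => he.lt_iff_lt.mp (by simpa using hxy)

section FinitePL

variable {n : ℕ} [NeZero n]

variable (n) in
def finitePL : Subgroup (Equiv.Perm ℝ) where
  carrier := {g | StrictMono g ∧ (breaks n g).Finite ∧ breaks n g ⊆ zpows n ∧
    ∀ x, g x ∈ zpows n ↔ x ∈ zpows n}
  one_mem' := by
    have hb : breaks n ⇑(1 : Equiv.Perm ℝ) = ∅ := breaks_eq_empty 0 0 (by simp)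
    exact ⟨strictMono_id, hb ▸ Set.finite_empty, hb ▸ Set.empty_subset _, fun _ => Iff.rfl⟩
  mul_mem' := by
    rintro g h ⟨hg, hgfin, hgZ, hgiff⟩ ⟨hh, hhfin, hhZ, hhiff⟩
    have hcont : Continuous h := hh.monotone.continuous_of_surjective h.surjective
    refine ⟨hg.comp hh, ?_, (breaks_comp_subset hcont).trans ?_, fun x => (hgiff _).trans (hhiff x)⟩
    · exact (hhfin.union (hgfin.preimage h.injective.injOn)).subset (breaks_comp_subset hcont)
    · exact Set.union_subset hhZ fun x hx => (hhiff x).mp (hgZ hx)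
  inv_mem' := by
    rintro g ⟨hg, hgfin, hgZ, hgiff⟩
    have hcont : Continuous ⇑g⁻¹ := hg.perm_inv.monotone.continuous_of_surjective g⁻¹.surjective
    refine ⟨hg.perm_inv, (hgfin.image g).subset (breaks_perm_inv_subset hcont), ?_, fun x => ?_⟩
    · intro x hx
      obtain ⟨y, hy, rfl⟩ := breaks_perm_inv_subset hcont hx
      exact (hgiff y).mpr (hgZ hy)
    · simpa using (hgiff (g⁻¹ x)).symm

lemma mem_finitePL_of_forall_eq_zpow_mul_add (g : Equiv.Perm ℝ) (k : ℤ) {c : ℝ}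
    (hc : c ∈ zpows n) (hg : ∀ y, g y = (n : ℝ) ^ k * y + c) : g ∈ finitePL n := by
  have hb : breaks n g = ∅ := breaks_eq_empty k c hg
  have hpos : (0 : ℝ) < (n : ℝ) ^ k := zpow_pos (Nat.cast_pos.mpr (NeZero.pos n)) k
  refine ⟨fun x y h => ?_, hb ▸ Set.finite_empty, hb ▸ Set.empty_subset _, fun x => ?_⟩
  · rw [hg, hg]
    exact add_lt_add_left (mul_lt_mul_of_pos_left h hpos) c
  · rw [hg, add_mem_zpows_iff hc, zpow_mul_mem_zpows_iff]

end FinitePL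

section MemPL

variable {n : ℕ}

lemma memPL_iff {g : ℝ → ℝ} : MemPL n g ↔ StrictMono g ∧ Function.Surjective g ∧
    (∃ B ⊆ zpows n, LocDiscrete B ∧ ∀ x ∉ B, IsLocAffineAt n g x) ∧
    ∀ q ∈ zpows n, g q ∈ zpows n := by
  simp only [MemPL, isLocAffineAt_iff]

lemma MemPL.of_mem_finitePL [NeZero n] {g : Equiv.Perm ℝ} (hg : g ∈ finitePL n) :
    MemPL n g := by
  obtain ⟨hmono, hfin, hZ, hiff⟩ := hg
  exact memPL_iff.mpr ⟨hmono, g.surjective,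
    ⟨breaks n g, hZ, hfin.locDiscrete, fun x hx => not_not.mp hx⟩, fun q hq => (hiff q).mpr hq⟩

lemma StrictMono.ite_le {g₁ g₂ : ℝ → ℝ} {c : ℝ} (h₁ : StrictMono g₁) (h₂ : StrictMono g₂)
    (hc : g₁ c = g₂ c) : StrictMono fun x => if x ≤ c then g₁ x else g₂ x := by
  intro x y hxy
  dsimp only
  split_ifs with hx hy hy
  · exact h₁ hxy
  · exact (h₁.monotone hx).trans_lt (hc ▸ h₂ (not_le.mp hy))
  · exact absurd (hxy.le.trans hy) hx
  · exact h₂ hxy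

lemma Function.Surjective.ite_le {g₁ g₂ : ℝ → ℝ} {c : ℝ} (h₁ : StrictMono g₁)
    (h₂ : StrictMono g₂) (hs₁ : Function.Surjective g₁) (hs₂ : Function.Surjective g₂)
    (hc : g₁ c = g₂ c) : Function.Surjective fun x => if x ≤ c then g₁ x else g₂ x := by
  intro y
  rcases le_or_gt y (g₁ c) with hy | hy
  · obtain ⟨x, rfl⟩ := hs₁ y
    exact ⟨x, if_pos (h₁.le_iff_le.mp hy)⟩
  · obtain ⟨x, rfl⟩ := hs₂ y
    exact ⟨x, if_neg (not_le.mpr (h₂.lt_iff_lt.mp (hc ▸ hy)))⟩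

lemma MemPL.ite_le {g₁ g₂ : ℝ → ℝ} {c : ℝ} (h₁ : MemPL n g₁) (h₂ : MemPL n g₂)
    (hcZ : c ∈ zpows n) (hc : g₁ c = g₂ c) : MemPL n fun x => if x ≤ c then g₁ x else g₂ x := by
  obtain ⟨hm₁, hs₁, ⟨B₁, hBZ₁, hBd₁, hB₁⟩, hZ₁⟩ := memPL_iff.mp h₁
  obtain ⟨hm₂, hs₂, ⟨B₂, hBZ₂, hBd₂, hB₂⟩, hZ₂⟩ := memPL_iff.mp h₂
  refine memPL_iff.mpr ⟨hm₁.ite_le hm₂ hc, hs₁.ite_le hm₁ hm₂ hs₂ hc,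
    ⟨B₁ ∪ B₂ ∪ {c}, Set.union_subset (Set.union_subset hBZ₁ hBZ₂) (by simpa using hcZ),
      (hBd₁.union hBd₂).union (Set.finite_singleton c).locDiscrete, fun x hx => ?_⟩,
    fun q hq => by split_ifs; exacts [hZ₁ q hq, hZ₂ q hq]⟩
  simp only [Set.mem_union, Set.mem_singleton_iff, not_or] at hx
  rcases lt_or_gt_of_ne hx.2 with hxc | hxc
  · refine (hB₁ x hx.1.1).congr ?_
    filter_upwards [Iio_mem_nhds hxc] with y hy
    exact (if_pos (le_of_lt hy)).symm
  · refine (hB₂ x hx.1.2).congr ?_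
    filter_upwards [Ioi_mem_nhds hxc] with y hy
    exact (if_neg (not_le.mpr hy)).symm

lemma exists_forall_lt_abs_eq_self {g : ℝ → ℝ} (hbot : ∀ᶠ x in atBot, g x = x)
    (htop : ∀ᶠ x in atTop, g x = x) : ∃ M, ∀ x, M < |x| → g x = x := by
  obtain ⟨A, hA⟩ := eventually_atBot.mp hbot
  obtain ⟨B, hB⟩ := eventually_atTop.mp htop
  refine ⟨|A| + |B|, fun x hx => ?_⟩
  rcases lt_abs.mp hx with hx | hx
  · exact hB x (by linarith [le_abs_self B, abs_nonneg A])
  · exact hA x (by linarith [neg_abs_le A, abs_nonneg B])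

end MemPL

section Tail

variable {n : ℕ}

variable (n) in
def basicMap (y : ℝ) : ℝ :=
  if y ≤ -1 then y - (n - 1) else if y ≤ 1 then n * y else y + (n - 1)

lemma basicMap_neg (y : ℝ) : basicMap n (-y) = -basicMap n y := by
  unfold basicMap
  split_ifs <;> nlinarith

lemma basicMap_of_one_le {y : ℝ} (hy : 1 ≤ y) : basicMap n y = y + (n - 1) := by
  unfold basicMap
  split_ifs <;> nlinarith

lemma breaks_basicMap_subset : breaks n (basicMap n) ⊆ {-1, 1} := by
  intro x hx
  by_contra hx'
  simp only [Set.mem_insert_iff, Set.mem_singleton_iff, not_or] at hx'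
  apply hx
  rcases lt_or_gt_of_ne hx'.1 with h₁ | h₁
  · refine ⟨0, -(n - 1), ?_⟩
    filter_upwards [Iio_mem_nhds h₁] with y hy
    rw [basicMap, if_pos hy.le, zpow_zero]; ring
  rcases lt_or_gt_of_ne hx'.2 with h₂ | h₂
  · refine ⟨1, 0, ?_⟩
    filter_upwards [Ioo_mem_nhds h₁ h₂] with y hy
    rw [basicMap, if_neg (not_le.mpr hy.1), if_pos hy.2.le, zpow_one]; ring
  · refine ⟨0, n - 1, ?_⟩
    filter_upwards [Ioi_mem_nhds h₂] with y hy
    rw [basicMap, if_neg (by linarith [hy.out]), if_neg (not_le.mpr hy), zpow_zero]; ring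

variable [NeZero n]

lemma basicMap_strictMono : StrictMono (basicMap n) := by
  have : (1 : ℝ) ≤ n := Nat.one_le_cast.mpr NeZero.one_le
  intro x y hxy
  unfold basicMap
  split_ifs <;> nlinarith

lemma basicMap_surjective : Function.Surjective (basicMap n) := by
  have : (1 : ℝ) ≤ n := Nat.one_le_cast.mpr NeZero.one_le
  intro y
  rcases le_or_gt y (-n) with h₁ | h₁
  · exact ⟨y + (n - 1), by rw [basicMap, if_pos (by linarith)]; ring⟩
  rcases le_or_gt y n with h₂ | h₂
  · refine ⟨y / n, ?_⟩
    rw [basicMap, if_neg, if_pos, mul_div_cancel₀ y (NeZero.ne _)]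
    · rwa [div_le_one₀ (by positivity)]
    · rw [not_le, lt_div_iff₀ (by positivity)]; linarith
  · exact ⟨y - (n - 1), by rw [basicMap, if_neg (by linarith), if_neg (by linarith)]; ring⟩

variable (n) in
def basicPerm : Equiv.Perm ℝ :=
  Equiv.ofBijective (basicMap n) ⟨basicMap_strictMono.injective, basicMap_surjective⟩

@[simp] lemma basicPerm_apply (y : ℝ) : basicPerm n y = basicMap n y := rfl

lemma basicPerm_mem_finitePL : basicPerm n ∈ finitePL n := by
  have hint : ((n : ℝ) - 1) ∈ zpows n := ⟨n - 1, 0, by simp⟩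
  refine ⟨basicMap_strictMono, (Set.toFinite {-1, 1}).subset breaks_basicMap_subset,
    breaks_basicMap_subset.trans ?_, fun x => ?_⟩
  · rintro _ (rfl | rfl)
    exacts [⟨-1, 0, by simp⟩, ⟨1, 0, by simp⟩]
  · rw [basicPerm_apply, basicMap]
    split_ifs
    · rw [sub_eq_add_neg]; exact add_mem_zpows_iff ((zpowsSubring n).neg_mem hint)
    · simpa using zpow_mul_mem_zpows_iff (n := n) 1 (x := x)
    · exact add_mem_zpows_iff hint

lemma basicPerm_zpow_apply_of_one_le (t : ℤ) {y : ℝ} (hy : 1 ≤ y)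
    (hyt : 1 ≤ y + t * ((n : ℝ) - 1)) : (basicPerm n ^ t) y = y + t * ((n : ℝ) - 1) := by
  have : (1 : ℝ) ≤ n := Nat.one_le_cast.mpr NeZero.one_le
  induction t using Int.induction_on generalizing y with
  | zero => simp
  | succ t ih =>
    push_cast at hyt ih ⊢
    rw [zpow_add_one, Equiv.Perm.mul_apply, basicPerm_apply, basicMap_of_one_le hy,
      ih (by linarith) (by linarith)]
    ring
  | pred t ih =>
    push_cast at hyt ih ⊢
    have hy' : 1 ≤ y - (n - 1) := by nlinarith [(Nat.cast_nonneg t : (0 : ℝ) ≤ t)]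
    have hv : (basicPerm n)⁻¹ y = y - (n - 1) := by
      rw [Equiv.Perm.inv_eq_iff_eq, basicPerm_apply, basicMap_of_one_le hy']
      ring
    rw [zpow_sub_one, Equiv.Perm.mul_apply, hv, ih hy' (by linarith)]
    ring

lemma basicPerm_zpow_neg_apply (t : ℤ) (y : ℝ) :
    (basicPerm n ^ t) (-y) = -(basicPerm n ^ t) y := by
  have h : Commute (Equiv.neg ℝ) (basicPerm n) := Equiv.ext fun y => by
    simp [Equiv.Perm.mul_apply, basicMap_neg]
  exact (Equiv.ext_iff.mp (h.zpow_right t) y).symm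

lemma eventually_basicPerm_zpow_atTop (t : ℤ) :
    ∀ᶠ y in atTop, (basicPerm n ^ t) y = y + t * ((n : ℝ) - 1) := by
  filter_upwards [eventually_ge_atTop 1, eventually_ge_atTop (1 - t * ((n : ℝ) - 1))]
    with y h₁ h₂
  exact basicPerm_zpow_apply_of_one_le t h₁ (by linarith)

lemma eventually_basicPerm_zpow_atBot (t : ℤ) :
    ∀ᶠ y in atBot, (basicPerm n ^ t) y = y - t * ((n : ℝ) - 1) := by
  filter_upwards [eventually_le_atBot (-1), eventually_le_atBot (t * ((n : ℝ) - 1) - 1)]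
    with y h₁ h₂
  rw [← neg_neg y, basicPerm_zpow_neg_apply,
    basicPerm_zpow_apply_of_one_le t (by linarith) (by linarith)]
  ring

variable (n) in
def tailPerm (p r : ℝ) (k t : ℤ) : Equiv.Perm ℝ :=
  Equiv.addRight r * Equiv.mulLeft₀ ((n : ℝ) ^ (-k)) (zpow_ne_zero _ (NeZero.ne _)) *
    basicPerm n ^ t * Equiv.mulLeft₀ ((n : ℝ) ^ k) (zpow_ne_zero _ (NeZero.ne _)) *
    Equiv.addRight (-p)

lemma tailPerm_apply (p r : ℝ) (k t : ℤ) (x : ℝ) :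
    tailPerm n p r k t x = (n : ℝ) ^ (-k) * (basicPerm n ^ t) ((n : ℝ) ^ k * (x - p)) + r := by
  simp [tailPerm, Equiv.Perm.mul_apply, sub_eq_add_neg]

lemma tailPerm_mem_finitePL {p r : ℝ} (hp : p ∈ zpows n) (hr : r ∈ zpows n) (k t : ℤ) :
    tailPerm n p r k t ∈ finitePL n := by
  have h0 : (0 : ℝ) ∈ zpows n := zero_mem (zpowsSubring n)
  have := basicPerm_mem_finitePL (n := n)
  have := mem_finitePL_of_forall_eq_zpow_mul_add (Equiv.addRight r) 0 hr (by simp)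
  have := mem_finitePL_of_forall_eq_zpow_mul_add (Equiv.addRight (-p)) 0
    ((zpowsSubring n).neg_mem hp) (by simp)
  have := mem_finitePL_of_forall_eq_zpow_mul_add
    (Equiv.mulLeft₀ ((n : ℝ) ^ k) (zpow_ne_zero _ (NeZero.ne _))) k h0 (by simp)
  have := mem_finitePL_of_forall_eq_zpow_mul_add
    (Equiv.mulLeft₀ ((n : ℝ) ^ (-k)) (zpow_ne_zero _ (NeZero.ne _))) (-k) h0 (by simp)
  unfold tailPerm
  apply_rules [Subgroup.mul_mem, Subgroup.zpow_mem]

lemma tailPerm_apply_self (p r : ℝ) (k t : ℤ) : tailPerm n p r k t p = r := by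
  rw [tailPerm_apply, sub_self, mul_zero,
    Equiv.Perm.zpow_apply_eq_self_of_apply_eq_self (by simp [basicMap]), mul_zero, zero_add]

lemma tailPerm_apply_eq_self {p r : ℝ} {k t u : ℤ}
    (h : (p - r) * (n : ℝ) ^ k = t * ((n : ℝ) - 1)) {x : ℝ}
    (hx : (basicPerm n ^ u) ((n : ℝ) ^ k * (x - p)) = (n : ℝ) ^ k * (x - p) + t * ((n : ℝ) - 1)) :
    tailPerm n p r k u x = x := by
  have hk : (n : ℝ) ^ k ≠ 0 := zpow_ne_zero k (NeZero.ne _)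
  rw [tailPerm_apply, hx, ← h, zpow_neg]
  field_simp
  ring

variable {φ : ℝ → ZMod (n - 1)}

lemma exists_rightTail (hφ : IsPhi n φ) {p r : ℝ} (hp : p ∈ zpows n) (hr : r ∈ zpows n)
    (h : φ r = φ p) : ∃ R ∈ finitePL n, R p = r ∧ ∀ᶠ x in atTop, R x = x := by
  obtain ⟨k, t, hkt⟩ := hφ.exists_sub_mul_zpow_eq hp hr h.symm
  refine ⟨tailPerm n p r k t, tailPerm_mem_finitePL hp hr k t, tailPerm_apply_self p r k t, ?_⟩
  have hδ : Tendsto (fun x => (n : ℝ) ^ k * (x - p)) atTop atTop :=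
    (tendsto_atTop_add_const_right _ (-p) tendsto_id).const_mul_atTop
      (zpow_pos (Nat.cast_pos.mpr (NeZero.pos n)) k)
  filter_upwards [hδ.eventually (eventually_basicPerm_zpow_atTop (n := n) t)] with x hx
  exact tailPerm_apply_eq_self hkt hx

lemma exists_leftTail (hφ : IsPhi n φ) {p r : ℝ} (hp : p ∈ zpows n) (hr : r ∈ zpows n)
    (h : φ r = φ p) : ∃ L ∈ finitePL n, L p = r ∧ ∀ᶠ x in atBot, L x = x := by
  obtain ⟨k, t, hkt⟩ := hφ.exists_sub_mul_zpow_eq hp hr h.symm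
  refine ⟨tailPerm n p r k (-t), tailPerm_mem_finitePL hp hr k (-t),
    tailPerm_apply_self p r k (-t), ?_⟩
  have hδ : Tendsto (fun x => (n : ℝ) ^ k * (x - p)) atBot atBot :=
    (tendsto_atBot_add_const_right _ (-p) tendsto_id).const_mul_atBot
      (zpow_pos (Nat.cast_pos.mpr (NeZero.pos n)) k)
  filter_upwards [hδ.eventually (eventually_basicPerm_zpow_atBot (n := n) (-t))] with x hx
  exact tailPerm_apply_eq_self hkt (by rw [hx]; push_cast; ring)

end Tail

/-- If `f ∈ PLₙ(ℝ)` satisfies `φₙ(f x) = φₙ x` for all `x ∈ ℤ[1/n]`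
(i.e. `dₙ(f) = 0`) and `a < b`, then some `g ∈ BPLₙ(ℝ)` agrees with `f` on `[a, b]`. -/
theorem stmt_6 (n : ℕ) (hn : 2 ≤ n) (φ : ℝ → ZMod (n - 1)) (hφ : IsPhi n φ)
    (f : ℝ → ℝ) (hf : MemPL n f) (hker : ∀ x ∈ zpows n, φ (f x) = φ x)
    (a b : ℝ) (hab : a < b) :
    ∃ g : ℝ → ℝ, MemBPL n g ∧ ∀ x ∈ Set.Icc a b, g x = f x := by
  have : NeZero n := ⟨by omega⟩
  have hfZ : ∀ x ∈ zpows n, f x ∈ zpows n := hf.2.2.2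
  obtain ⟨p, hpa⟩ := exists_int_lt a
  obtain ⟨q, hbq⟩ := exists_int_gt b
  have hpZ : (p : ℝ) ∈ zpows n := intCast_mem (zpowsSubring n) p
  have hqZ : (q : ℝ) ∈ zpows n := intCast_mem (zpowsSubring n) q
  obtain ⟨L, hL, hLp, hLbot⟩ := exists_leftTail hφ hpZ (hfZ p hpZ) (hker p hpZ)
  obtain ⟨R, hR, hRq, hRtop⟩ := exists_rightTail hφ hqZ (hfZ q hqZ) (hker q hqZ)
  refine ⟨fun x => if x ≤ p then L x else if x ≤ q then f x else R x, ⟨?_, ?_⟩, ?_⟩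
  · refine (MemPL.of_mem_finitePL hL).ite_le
      (hf.ite_le (MemPL.of_mem_finitePL hR) hqZ hRq.symm) hpZ ?_
    rw [hLp, if_pos (by linarith)]
  · apply exists_forall_lt_abs_eq_self
    · filter_upwards [eventually_le_atBot (p : ℝ), hLbot] with x hx hLx
      rw [if_pos hx, hLx]
    · filter_upwards [eventually_gt_atTop (q : ℝ), hRtop] with x hx hRx
      rw [if_neg (by linarith), if_neg (not_le.mpr hx), hRx]
  · rintro x ⟨hax, hxb⟩
    dsimp only
    rw [if_neg (by linarith), if_pos (by linarith)]
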